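/- With the hypotheses of Moser's example: x'' + x + x³ + ε·f(t,x,x') = 0, ε > 0, y·f(t,x,y) ≥ 0 everywhere, and y·f(t,x,y) > 0 whenever x·y > 0 — if x is a non-constant periodic solution then x'(t)·f(t, x(t), x'(t)) = 0 for all t. -/

import Mathlib

/-!
The energy `V = 2x² + x⁴ + 2x'²` of a solution satisfies `V' = -4ε·x'·f(t,x,x') ≤ 0`. A periodic
function that is antitone is constant, so `V' ≡ 0`, and dividing by `-4ε` gives `x'·f ≡ 0`.
-/

open Function

theorem Function.Periodic.eq_of_antitone {α β : Type*} [AddCommGroup α] [LinearOrder α]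
    [IsOrderedAddMonoid α] [Archimedean α] [PartialOrder β] {f : α → β} {c : α}
    (hf : Periodic f c) (hc : 0 < c) (hanti : Antitone f) (a b : α) : f a = f b := by
  wlog hab : a ≤ b generalizing a b
  · exact (this b a (le_of_not_ge hab)).symm
  obtain ⟨n, hn⟩ := Archimedean.arch (b - a) hc
  have hb : b ≤ a + n • c := sub_le_iff_le_add'.mp hn
  refine le_antisymm ?_ (hanti hab)
  calc f a = f (a + n • c) := ((hf.nsmul n) a).symm
    _ ≤ f b := hanti hb

theorem Function.Periodic.deriv {𝕜 F : Type*} [NontriviallyNormedField 𝕜] [NormedAddCommGroup F]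
    [NormedSpace 𝕜 F] {f : 𝕜 → F} {c : 𝕜} (hf : Periodic f c) :
    Periodic (deriv f) c := fun t => by
  rw [← deriv_comp_add_const, funext hf]

/-- The energy of Moser's equation `x'' + x + x³ + ε·f(t,x,x') = 0`, up to the factor 4. -/
noncomputable def moserEnergy (x : ℝ → ℝ) (t : ℝ) : ℝ :=
  2 * x t ^ 2 + x t ^ 4 + 2 * deriv x t ^ 2

theorem Function.Periodic.moserEnergy {x : ℝ → ℝ} {T : ℝ} (hx : Periodic x T) :
    Periodic (moserEnergy x) T := fun t => by
  simp only [_root_.moserEnergy, hx t, hx.deriv t]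

theorem hasDerivAt_moserEnergy {x : ℝ → ℝ} {t : ℝ} (hx : DifferentiableAt ℝ x t)
    (hx' : DifferentiableAt ℝ (deriv x) t) :
    HasDerivAt (moserEnergy x) (4 * deriv x t * (deriv (deriv x) t + x t + x t ^ 3)) t := by
  have h := ((hx.hasDerivAt.pow 2).const_mul 2).add (hx.hasDerivAt.pow 4) |>.add
    ((hx'.hasDerivAt.pow 2).const_mul 2)
  refine h.congr_deriv ?_
  push_cast
  ring

theorem stmt8_general (ε : ℝ) (hε : 0 < ε) (f : ℝ × ℝ × ℝ → ℝ)
    (hsign : ∀ t x y, y * f (t, x, y) ≥ 0)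
    (x : ℝ → ℝ) (hx : Differentiable ℝ x) (hx' : Differentiable ℝ (deriv x))
    (T : ℝ) (hT : 0 < T) (hper : ∀ t, x (t + T) = x t)
    (hODE : ∀ t, deriv (deriv x) t + x t + (x t)^3 + ε * f (t, x t, deriv x t) = 0) :
    ∀ t, deriv x t * f (t, x t, deriv x t) = 0 := by
  have hV : ∀ t, HasDerivAt (moserEnergy x) (-(4 * ε) * (deriv x t * f (t, x t, deriv x t))) t :=
    fun t => by
      convert hasDerivAt_moserEnergy (hx t) (hx' t) using 1
      linear_combination (-4 * deriv x t) * hODE t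
  have hanti : Antitone (moserEnergy x) := antitone_of_hasDerivAt_nonpos hV fun t => by
    have := hsign t (x t) (deriv x t)
    simp only [Pi.zero_apply]
    nlinarith
  have hconst : moserEnergy x = fun _ => moserEnergy x 0 :=
    funext fun t => (Periodic.moserEnergy hper).eq_of_antitone hT hanti t 0
  intro t
  have hzero : -(4 * ε) * (deriv x t * f (t, x t, deriv x t)) = 0 :=
    (hV t).unique (hconst ▸ hasDerivAt_const t _)
  simpa [hε.ne'] using hzero

/-- In Moser's example, a non-constant periodic solution forces `x'·f(t,x,x') ≡ 0`. -/
theorem stmt8 (ε : ℝ) (hε : 0 < ε) (f : ℝ × ℝ × ℝ → ℝ) (hf : Continuous f)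
    (hsign : ∀ t x y, y * f (t, x, y) ≥ 0)
    (hsign' : ∀ t x y, x * y > 0 → y * f (t, x, y) > 0)
    (x : ℝ → ℝ) (hx : Differentiable ℝ x) (hx' : Differentiable ℝ (deriv x))
    (T : ℝ) (hT : 0 < T) (hper : ∀ t, x (t + T) = x t)
    (hnc : ∃ s t, x s ≠ x t)
    (hODE : ∀ t, deriv (deriv x) t + x t + (x t)^3 + ε * f (t, x t, deriv x t) = 0) :
    ∀ t, deriv x t * f (t, x t, deriv x t) = 0 :=
  stmt8_general ε hε f hsign x hx hx' T hT hper hODE
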